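/- Strong invariance of sublevel sets (Lemma on invariant sets): let G be a connected undirected graph on n nodes with m edges and incidence matrix B, B̂ = B ⊗ I₃, and let 0 < C < 4π². Suppose x : [0, ∞) → ℝ^{3n} is locally Lipschitz, Σ_{i=1}^{n} ‖xᵢ(0)‖₂² < C, and for almost every t ≥ 0 the derivative x′(t) exists and x′(t) = −L_{x(t)} B̂ s(t) for some sign-selection s(t) ∈ ℝ^{3m} for B̂ᵀ x(t). Then Σ_{i=1}^{n} ‖xᵢ(t)‖₂² < C for all t ≥ 0; in fact t ↦ Σᵢ ‖xᵢ(t)‖₂² is non-increasing. -/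

import Mathlib

/-! A vector `x` is a left eigenvector of `L_x` for the eigenvalue `1` (the symmetric part fixes
`x` and `xᵀ x̂ = 0`), so along a Filippov solution `V = ∑ᵢ ‖xᵢ‖²` has derivative
`2 ∑ᵢ xᵢᵀ L_{xᵢ} (-B̂ s)ᵢ = -2 (B̂ᵀ x)ᵀ s = -2 ‖B̂ᵀ x‖₁ ≤ 0` almost everywhere. Being locally
Lipschitz along `x`, `V` is absolutely continuous on compact intervals, and the fundamental theorem
of calculus for such functions shows that it is non-increasing. -/

open Matrix Real

noncomputable section

/-- The skew-symmetric "hat" matrix of a vector in ℝ³. -/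
def hatm (p : Fin 3 → ℝ) : Matrix (Fin 3) (Fin 3) ℝ :=
  !![0, -p 2, p 1; p 2, 0, -p 0; -p 1, p 0, 0]

/-- The Euclidean (ℓ²) norm on ℝ³. -/
def norm2 (p : Fin 3 → ℝ) : ℝ := Real.sqrt (∑ i, p i ^ 2)

/-- The unnormalized sinc function: α · sinc α = sin α, sinc 0 = 1. -/
def sinc (α : ℝ) : ℝ := if α = 0 then 1 else Real.sin α / α

/-- c(θ) = sinc(θ)/sinc²(θ/2). -/
def cfun (θ : ℝ) : ℝ := _root_.sinc θ / _root_.sinc (θ / 2) ^ 2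

/-- The symmetric part L¹ₓ of the transition matrix (L¹₀ := I₃). -/
def L1mat (x : Fin 3 → ℝ) : Matrix (Fin 3) (Fin 3) ℝ :=
  if x = 0 then 1 else
    cfun (norm2 x) • (1 : Matrix (Fin 3) (Fin 3) ℝ)
      + ((1 - cfun (norm2 x)) / norm2 x ^ 2) • vecMulVec x x

/-- The transition matrix Lₓ of the axis-angle kinematics (L₀ := I₃). -/
def Lmat (x : Fin 3 → ℝ) : Matrix (Fin 3) (Fin 3) ℝ :=
  if x = 0 then 1 else
    cfun (norm2 x) • (1 : Matrix (Fin 3) (Fin 3) ℝ)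
      + ((1 - cfun (norm2 x)) / norm2 x ^ 2) • vecMulVec x x
      + (1 / 2 : ℝ) • hatm x

/-- `s` is a sign-selection for `z`: each component lies in [−1,1] and equals
`sign (z ℓ)` whenever `z ℓ ≠ 0`. -/
def SignSel {k : Type*} (s z : k → ℝ) : Prop :=
  ∀ ℓ, s ℓ ∈ Set.Icc (-1 : ℝ) 1 ∧ (z ℓ ≠ 0 → s ℓ = Real.sign (z ℓ))

/-- Vector-valued (ℝ³-blocks) sign-selection, componentwise. -/
def SignSelV {m : ℕ} (s z : Fin m → Fin 3 → ℝ) : Prop :=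
  ∀ e k, s e k ∈ Set.Icc (-1 : ℝ) 1 ∧ (z e k ≠ 0 → s e k = Real.sign (z e k))

open MeasureTheory Set

theorem norm2_sq (p : Fin 3 → ℝ) : norm2 p ^ 2 = p ⬝ᵥ p := by
  rw [norm2, Real.sq_sqrt (by positivity)]
  simp [dotProduct, sq]

theorem vecMul_Lmat_self (p : Fin 3 → ℝ) : p ᵥ* Lmat p = p := by
  by_cases hp : p = 0
  · simp [hp, Lmat]
  have hcross : p ᵥ* hatm p = 0 := by
    ext k; fin_cases k <;> simp [hatm, vecMul, dotProduct, Fin.sum_univ_three] <;> ring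
  have hnorm : norm2 p ≠ 0 := by
    rw [ne_eq, ← sq_eq_zero_iff, norm2_sq, dotProduct_self_eq_zero]
    exact hp
  simp only [Lmat, if_neg hp, vecMul_add, vecMul_smul, vecMul_one, vecMul_vecMulVec, hcross,
    ← norm2_sq, smul_zero, add_zero, smul_smul, ← add_smul]
  rw [div_mul_cancel₀ _ (pow_ne_zero 2 hnorm)]
  simp

theorem dotProduct_Lmat_mulVec (p w : Fin 3 → ℝ) : p ⬝ᵥ (Lmat p *ᵥ w) = p ⬝ᵥ w := by
  rw [dotProduct_mulVec, vecMul_Lmat_self]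

theorem SignSelV.mul_nonneg {m : ℕ} {s z : Fin m → Fin 3 → ℝ} (h : SignSelV s z) (e : Fin m)
    (k : Fin 3) : 0 ≤ z e k * s e k := by
  by_cases hz : z e k = 0
  · simp [hz]
  · rw [(h e k).2 hz, mul_comm]
    exact Real.sign_mul_nonneg _

theorem sum_dotProduct_neg_Lmat_mulVec_nonpos {ι : Type*} [Fintype ι] {m : ℕ}
    (B : Matrix ι (Fin m) ℝ) (p : ι → Fin 3 → ℝ) (s : Fin m → Fin 3 → ℝ)
    (hs : SignSelV s (fun e k => ∑ i, B i e * p i k)) :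
    ∑ i, p i ⬝ᵥ -(Lmat (p i) *ᵥ ∑ e, B i e • s e) ≤ 0 := by
  have hswap : ∑ i, p i ⬝ᵥ ∑ e, B i e • s e = ∑ e, ∑ k, (∑ i, B i e * p i k) * s e k := by
    simp only [dotProduct, Finset.sum_apply, Pi.smul_apply, smul_eq_mul, Finset.mul_sum,
      Finset.sum_mul]
    rw [Finset.sum_comm]
    conv_rhs => rw [Finset.sum_comm]
    refine Finset.sum_congr rfl fun k _ => ?_
    rw [Finset.sum_comm]
    exact Finset.sum_congr rfl fun e _ => Finset.sum_congr rfl fun i _ => by ring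
  simp only [dotProduct_neg, dotProduct_Lmat_mulVec, Finset.sum_neg_distrib, hswap,
    neg_nonpos]
  exact Finset.sum_nonneg fun e _ => Finset.sum_nonneg fun k _ => hs.mul_nonneg e k

theorem HasDerivAt.sum_norm2_sq {ι : Type*} [Fintype ι] {x : ℝ → ι → Fin 3 → ℝ}
    {x' : ι → Fin 3 → ℝ} {t : ℝ} (hx : HasDerivAt x x' t) :
    HasDerivAt (fun t => ∑ i, norm2 (x t i) ^ 2) (2 * ∑ i, x t i ⬝ᵥ x' i) t := by
  have hcoord (i : ι) (k : Fin 3) : HasDerivAt (fun t => x t i k) (x' i k) t :=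
    hasDerivAt_pi.1 (hasDerivAt_pi.1 hx i) k
  simp only [norm2_sq, dotProduct, Finset.mul_sum]
  refine HasDerivAt.fun_sum fun i _ => HasDerivAt.fun_sum fun k _ => ?_
  exact ((hcoord i k).fun_mul (hcoord i k)).congr_deriv (by ring)

theorem LocallyLipschitz.exists_lipschitzOnWith_comp {α X Y : Type*} [PseudoMetricSpace α]
    [PseudoMetricSpace X] [PseudoMetricSpace Y] {g : X → Y} (hg : LocallyLipschitz g)
    {x : α → X} {K : NNReal} {s : Set α} (hs : IsCompact s) (hx : LipschitzOnWith K x s) :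
    ∃ K', LipschitzOnWith K' (g ∘ x) s := by
  obtain ⟨Kg, hKg⟩ := hg.locallyLipschitzOn.exists_lipschitzOnWith_of_compact
    (hs.image_of_continuousOn hx.continuousOn)
  exact ⟨Kg * K, hKg.comp hx (mapsTo_image x s)⟩

theorem AbsolutelyContinuousOnInterval.le_of_ae_hasDerivAt_nonpos {f : ℝ → ℝ} {a b : ℝ}
    (hab : a ≤ b) (hf : AbsolutelyContinuousOnInterval f a b)
    (hf' : ∀ᵐ t, t ∈ Icc a b → ∃ f', HasDerivAt f f' t ∧ f' ≤ 0) :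
    f b ≤ f a := by
  rw [← sub_nonpos, ← hf.integral_deriv_eq_sub, intervalIntegral.integral_of_le hab]
  refine integral_nonpos_of_ae ((ae_restrict_iff' measurableSet_Ioc).2 ?_)
  filter_upwards [hf'] with t ht htab
  obtain ⟨f', hd, hf'⟩ := ht (Ioc_subset_Icc_self htab)
  simpa [hd.deriv] using hf'

open MeasureTheory in
theorem sublevel_sets_strongly_invariant_general {n m : ℕ}
    (B : Matrix (Fin n) (Fin m) ℝ)
    (C : ℝ)
    (x : ℝ → Fin n → Fin 3 → ℝ)
    (hlip : ∀ a b : ℝ, 0 ≤ a → ∃ K : NNReal, LipschitzOnWith K x (Set.Icc a b))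
    (h0 : ∑ i, norm2 (x 0 i) ^ 2 < C)
    (hdyn : ∀ᵐ t ∂(volume : Measure ℝ), 0 ≤ t →
      ∃ s : Fin m → Fin 3 → ℝ,
        SignSelV s (fun e k => ∑ i, B i e * x t i k) ∧
        HasDerivAt x (fun i => -(Lmat (x t i)).mulVec (∑ e, B i e • s e)) t) :
    (∀ t ≥ (0 : ℝ), ∑ i, norm2 (x t i) ^ 2 < C) ∧
    AntitoneOn (fun t => ∑ i, norm2 (x t i) ^ 2) (Set.Ici 0) := by
  have hV : LocallyLipschitz fun y : Fin n → Fin 3 → ℝ => ∑ i, norm2 (y i) ^ 2 := by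
    simp only [norm2_sq, dotProduct]
    exact ContDiff.locallyLipschitz (𝕂 := ℝ) (by fun_prop)
  have hanti : AntitoneOn (fun t => ∑ i, norm2 (x t i) ^ 2) (Ici 0) := by
    intro a ha b _ hab
    obtain ⟨K, hK⟩ := hlip a b ha
    obtain ⟨K', hK'⟩ := hV.exists_lipschitzOnWith_comp isCompact_Icc hK
    refine AbsolutelyContinuousOnInterval.le_of_ae_hasDerivAt_nonpos hab
      (LipschitzOnWith.absolutelyContinuousOnInterval (K := K') (by rwa [uIcc_of_le hab])) ?_
    filter_upwards [hdyn] with t ht htab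
    obtain ⟨s, hs, hx⟩ := ht (ha.trans htab.1)
    exact ⟨_, hx.sum_norm2_sq,
      mul_nonpos_of_nonneg_of_nonpos zero_le_two (sum_dotProduct_neg_Lmat_mulVec_nonpos B _ s hs)⟩
  exact ⟨fun t ht => (hanti self_mem_Ici ht ht).trans_lt h0, hanti⟩

open MeasureTheory in
/-- strong invariance of sublevel sets.  A locally Lipschitz
Filippov solution of ẋ = −Lₓ B̂ sign(B̂ᵀ x) starting with ∑ᵢ ‖xᵢ(0)‖² < C < 4π²
stays in that sublevel set, and t ↦ ∑ᵢ ‖xᵢ(t)‖² is non-increasing on [0,∞). -/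
theorem sublevel_sets_strongly_invariant {n m : ℕ}
    (te he : Fin m → Fin n) (hloop : ∀ e, te e ≠ he e)
    (hconn : (SimpleGraph.fromRel (fun i j => ∃ e, te e = i ∧ he e = j)).Connected)
    (B : Matrix (Fin n) (Fin m) ℝ)
    (hB : ∀ i e, B i e = if i = te e then 1 else if i = he e then -1 else 0)
    (C : ℝ) (hC0 : 0 < C) (hC : C < 4 * Real.pi ^ 2)
    (x : ℝ → Fin n → Fin 3 → ℝ)
    (hlip : ∀ a b : ℝ, 0 ≤ a → ∃ K : NNReal, LipschitzOnWith K x (Set.Icc a b))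
    (h0 : ∑ i, norm2 (x 0 i) ^ 2 < C)
    (hdyn : ∀ᵐ t ∂(volume : Measure ℝ), 0 ≤ t →
      ∃ s : Fin m → Fin 3 → ℝ,
        SignSelV s (fun e k => ∑ i, B i e * x t i k) ∧
        HasDerivAt x (fun i => -(Lmat (x t i)).mulVec (∑ e, B i e • s e)) t) :
    (∀ t ≥ (0 : ℝ), ∑ i, norm2 (x t i) ^ 2 < C) ∧
    AntitoneOn (fun t => ∑ i, norm2 (x t i) ^ 2) (Set.Ici 0) :=
  sublevel_sets_strongly_invariant_general B C x hlip h0 hdyn
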